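/- arXiv:math/0406326 — 5 statements merged into one kernel-verified Lean document; each statement's English description precedes it below -/
import Mathlib

section
/- For any matrix B in GL(p,ℝ) with non-negative entries and any vectors x, y in the positive cone ℝ^p_+, the ratio ‖B·x‖/‖B·y‖ · ‖y‖/‖x‖ is bounded above by e^{d([x],[y])}, where d([x],[y]) = sup_{1≤i,j≤p} |ln(x_i y_j / (x_j y_i))| is the projective (Hilbert) distance. -/
open scoped BigOperators

/-- For any matrix `B ∈ GL(p,ℝ)` with non-negative entries and vectors `x, y` with strictly
positive coordinates, `‖B·x‖/‖B·y‖ · ‖y‖/‖x‖ ≤ exp (d([x],[y]))`, where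
`d([x],[y]) = sup_{i,j} |log (x i * y j / (x j * y i))|` is the projective (Hilbert) distance
and norms are Euclidean. -/
theorem projective_contraction_norm_ratio_le_exp_dist
    {p : ℕ} (hp : 1 ≤ p) (B : Matrix (Fin p) (Fin p) ℝ)
    (hBinv : IsUnit B) (hBnonneg : ∀ i j, 0 ≤ B i j)
    (x y : Fin p → ℝ) (hx : ∀ i, 0 < x i) (hy : ∀ i, 0 < y i)
    (d : ℝ) (hd : d = ⨆ i : Fin p, ⨆ j : Fin p, |Real.log (x i * y j / (x j * y i))|) :
    (Real.sqrt (∑ i, (B.mulVec x i) ^ 2) / Real.sqrt (∑ i, (B.mulVec y i) ^ 2)) *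
      (Real.sqrt (∑ i, (y i) ^ 2) / Real.sqrt (∑ i, (x i) ^ 2)) ≤ Real.exp d := by
  haveI hne : Nonempty (Fin p) := ⟨⟨0, hp⟩⟩
  have hdge : ∀ i j : Fin p, |Real.log (x i * y j / (x j * y i))| ≤ d := by
    intro i j
    rw [hd]
    calc |Real.log (x i * y j / (x j * y i))|
        ≤ ⨆ j, |Real.log (x i * y j / (x j * y i))| :=
          le_ciSup (f := fun j => |Real.log (x i * y j / (x j * y i))|)
            (Finite.bddAbove_range _) j
      _ ≤ ⨆ i, ⨆ j, |Real.log (x i * y j / (x j * y i))| :=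
          le_ciSup (f := fun i => ⨆ j, |Real.log (x i * y j / (x j * y i))|)
            (Finite.bddAbove_range _) i
  obtain ⟨j0, hj0⟩ := Finite.exists_min (fun i => x i / y i)
  set E := Real.exp d with hE
  have hEpos : 0 < E := Real.exp_pos d
  set c := x j0 / y j0 with hc
  have hcpos : 0 < c := div_pos (hx j0) (hy j0)
  have h1 : ∀ i, c * y i ≤ x i := by
    intro i
    rw [hc, div_mul_eq_mul_div, div_le_iff₀ (hy j0)]
    have := hj0 i
    rw [hc] at this
    rw [div_le_div_iff₀ (hy j0) (hy i)] at this
    linarith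
  have h2 : ∀ i, x i ≤ E * (c * y i) := by
    intro i
    have habs := (abs_le.mp (hdge i j0)).2
    have hpos : 0 < x i * y j0 / (x j0 * y i) :=
      div_pos (mul_pos (hx i) (hy j0)) (mul_pos (hx j0) (hy i))
    have key : x i * y j0 / (x j0 * y i) ≤ E :=
      (Real.log_le_iff_le_exp hpos).mp habs
    rw [div_le_iff₀ (mul_pos (hx j0) (hy i))] at key
    rw [hc, show E * (x j0 / y j0 * y i) = E * (x j0 * y i) / y j0 by ring,
      le_div_iff₀ (hy j0)]
    linarith
  -- norm comparisons
  have hBx2 : ∀ i, B.mulVec x i ≤ E * c * B.mulVec y i := by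
    intro i
    simp only [Matrix.mulVec, dotProduct]
    rw [Finset.mul_sum]
    refine Finset.sum_le_sum fun k _ => ?_
    have := mul_le_mul_of_nonneg_left (h2 k) (hBnonneg i k)
    nlinarith [this]
  have hBxnn : ∀ i, 0 ≤ B.mulVec x i := by
    intro i
    simp only [Matrix.mulVec, dotProduct]
    exact Finset.sum_nonneg fun k _ => mul_nonneg (hBnonneg i k) (hx k).le
  have hA : Real.sqrt (∑ i, (B.mulVec x i) ^ 2) ≤
      E * c * Real.sqrt (∑ i, (B.mulVec y i) ^ 2) := by
    have hsum : ∑ i, (B.mulVec x i) ^ 2 ≤ (E * c) ^ 2 * ∑ i, (B.mulVec y i) ^ 2 := by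
      rw [Finset.mul_sum]
      refine Finset.sum_le_sum fun i _ => ?_
      have := hBx2 i
      nlinarith [hBxnn i]
    calc Real.sqrt (∑ i, (B.mulVec x i) ^ 2)
        ≤ Real.sqrt ((E * c) ^ 2 * ∑ i, (B.mulVec y i) ^ 2) := Real.sqrt_le_sqrt hsum
      _ = E * c * Real.sqrt (∑ i, (B.mulVec y i) ^ 2) := by
          rw [Real.sqrt_mul (sq_nonneg _), Real.sqrt_sq (by positivity)]
  have hC : c * Real.sqrt (∑ i, (y i) ^ 2) ≤ Real.sqrt (∑ i, (x i) ^ 2) := by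
    have hsum : c ^ 2 * ∑ i, (y i) ^ 2 ≤ ∑ i, (x i) ^ 2 := by
      rw [Finset.mul_sum]
      refine Finset.sum_le_sum fun i _ => ?_
      have := h1 i
      nlinarith [mul_pos hcpos (hy i)]
    calc c * Real.sqrt (∑ i, (y i) ^ 2)
        = Real.sqrt (c ^ 2 * ∑ i, (y i) ^ 2) := by
          rw [Real.sqrt_mul (sq_nonneg _), Real.sqrt_sq hcpos.le]
      _ ≤ Real.sqrt (∑ i, (x i) ^ 2) := Real.sqrt_le_sqrt hsum
  -- positivity of denominators
  have hSx : 0 < Real.sqrt (∑ i, (x i) ^ 2) := by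
    rw [Real.sqrt_pos]
    exact Finset.sum_pos (fun i _ => pow_pos (hx i) 2) Finset.univ_nonempty
  have hSBy : 0 < Real.sqrt (∑ i, (B.mulVec y i) ^ 2) := by
    rw [Real.sqrt_pos]
    have hyne : y ≠ 0 := fun h => (hy ⟨0, hp⟩).ne' (congrFun h ⟨0, hp⟩)
    have hinj : Function.Injective B.mulVec := Matrix.mulVec_injective_iff_isUnit.mpr hBinv
    have hByne : B.mulVec y ≠ 0 := by
      intro h
      exact hyne (hinj (by rw [h, Matrix.mulVec_zero]))
    obtain ⟨i, hi⟩ := Function.ne_iff.mp hByne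
    refine Finset.sum_pos' (fun i _ => sq_nonneg _) ⟨i, Finset.mem_univ i, ?_⟩
    have : B.mulVec y i ≠ 0 := hi
    positivity
  rw [div_mul_div_comm, div_le_iff₀ (by positivity)]
  nlinarith [mul_le_mul_of_nonneg_right hA (Real.sqrt_nonneg (∑ i, (y i) ^ 2)),
    mul_le_mul_of_nonneg_left hC (by positivity : (0:ℝ) ≤ E * Real.sqrt (∑ i, (B.mulVec y i) ^ 2))]
end

section
/- If B ∈ GL(p,ℝ) has non-negative entries, then the Jacobian determinant of the projectivized map induced by B⁻¹ on the standard simplex satisfies |det D(B⁻¹)([y])| / |det D(B⁻¹)([x])| ≤ e^{d([x],[y])}, where the Jacobian at [x] equals ‖x‖/‖B·x‖ (up to the appropriate power) and d is the projective distance. -/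
open scoped BigOperators

/-- If `B ∈ GL(p,ℝ)` has non-negative entries, then the Jacobian of the projectivized map
induced by `B⁻¹` on the standard simplex, which at `[x]` equals `‖x‖/‖B·x‖` (Euclidean norms),
satisfies `|det D(B⁻¹)([y])| / |det D(B⁻¹)([x])| ≤ exp (d([x],[y]))` where `d` is the
projective (Hilbert) distance. -/
theorem projective_contraction_jacobian_ratio_le_exp_dist
    {p : ℕ} (hp : 1 ≤ p) (B : Matrix (Fin p) (Fin p) ℝ)
    (hBinv : IsUnit B) (hBnonneg : ∀ i j, 0 ≤ B i j)
    (x y : Fin p → ℝ) (hx : ∀ i, 0 < x i) (hy : ∀ i, 0 < y i)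
    (hx1 : ∑ i, x i = 1) (hy1 : ∑ i, y i = 1)
    (jac : (Fin p → ℝ) → ℝ)
    (hjac : ∀ z : Fin p → ℝ,
      jac z = Real.sqrt (∑ i, (z i) ^ 2) / Real.sqrt (∑ i, (B.mulVec z i) ^ 2))
    (d : ℝ) (hd : d = ⨆ i : Fin p, ⨆ j : Fin p, |Real.log (x i * y j / (x j * y i))|) :
    jac y / jac x ≤ Real.exp d := by
  haveI : Nonempty (Fin p) := ⟨⟨0, hp⟩⟩
  obtain ⟨i0, -, hi0⟩ := Finset.exists_max_image Finset.univ (fun i => y i / x i)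
    Finset.univ_nonempty
  obtain ⟨j0, -, hj0⟩ := Finset.exists_min_image Finset.univ (fun i => y i / x i)
    Finset.univ_nonempty
  set r := y i0 / x i0 with hr
  set s := y j0 / x j0 with hs
  have rpos : 0 < r := div_pos (hy i0) (hx i0)
  have spos : 0 < s := div_pos (hy j0) (hx j0)
  have hyr : ∀ i, y i ≤ r * x i := fun i => by
    have h := mul_le_mul_of_nonneg_right (hi0 i (Finset.mem_univ i)) (hx i).le
    rwa [div_mul_cancel₀ _ (hx i).ne'] at h
  have hsy : ∀ i, s * x i ≤ y i := fun i => by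
    have h := mul_le_mul_of_nonneg_right (hj0 i (Finset.mem_univ i)) (hx i).le
    rwa [div_mul_cancel₀ _ (hx i).ne'] at h
  -- log (r/s) ≤ d
  have hbdd : ∀ i : Fin p, BddAbove (Set.range fun j => |Real.log (x i * y j / (x j * y i))|) :=
    fun i => (Set.finite_range _).bddAbove
  have hbdd2 : BddAbove (Set.range fun i => ⨆ j, |Real.log (x i * y j / (x j * y i))|) :=
    (Set.finite_range _).bddAbove
  have hterm : |Real.log (x i0 * y j0 / (x j0 * y i0))| ≤ d := by
    rw [hd]
    exact le_trans (le_ciSup (hbdd i0) j0) (le_ciSup hbdd2 i0)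
  have hratio : x i0 * y j0 / (x j0 * y i0) = s / r := by
    rw [hs, hr]
    have h1 := (hx i0).ne'
    have h2 := (hx j0).ne'
    have h3 := (hy i0).ne'
    have h4 := (hy j0).ne'
    field_simp
  have hlog : Real.log (r / s) ≤ d := by
    have h1 : |Real.log (s / r)| ≤ d := by rwa [hratio] at hterm
    have h2 : Real.log (s / r) = - Real.log (r / s) := by
      rw [← Real.log_inv]; congr 1; field_simp
    rw [h2, abs_neg] at h1
    exact (le_abs_self _).trans h1
  have hrs : r / s ≤ Real.exp d := by
    have h := Real.exp_le_exp.2 hlog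
    rwa [Real.exp_log (div_pos rpos spos)] at h
  -- norms
  set Nx := Real.sqrt (∑ i, (x i) ^ 2) with hNxe
  set Ny := Real.sqrt (∑ i, (y i) ^ 2) with hNye
  set Dx := Real.sqrt (∑ i, (B.mulVec x i) ^ 2) with hDxe
  set Dy := Real.sqrt (∑ i, (B.mulVec y i) ^ 2) with hDye
  have hNx : 0 < Nx := Real.sqrt_pos.2 <| Finset.sum_pos
    (fun i _ => pow_pos (hx i) 2) Finset.univ_nonempty
  have hBx0 : B.mulVec x ≠ 0 := by
    intro h
    have hinj := Matrix.mulVec_injective_iff_isUnit.2 hBinv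
    have hx0 : x = 0 := by
      apply hinj; rw [h, Matrix.mulVec_zero]
    exact (hx i0).ne' (by rw [hx0]; rfl)
  have hDx : 0 < Dx := by
    rw [hDxe]
    apply Real.sqrt_pos.2
    obtain ⟨i, hi⟩ := Function.ne_iff.1 hBx0
    exact Finset.sum_pos' (fun k _ => sq_nonneg _)
      ⟨i, Finset.mem_univ i, (sq_nonneg _).lt_of_ne (Ne.symm (pow_ne_zero 2 hi))⟩
  have hBxnn : ∀ i, 0 ≤ B.mulVec x i := fun i => by
    simp only [Matrix.mulVec, dotProduct]
    exact Finset.sum_nonneg fun j _ => mul_nonneg (hBnonneg i j) (hx j).le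
  have hBys : ∀ i, s * B.mulVec x i ≤ B.mulVec y i := fun i => by
    simp only [Matrix.mulVec, dotProduct, Finset.mul_sum]
    refine Finset.sum_le_sum fun j _ => ?_
    have h := mul_le_mul_of_nonneg_left (hsy j) (hBnonneg i j)
    nlinarith [hBnonneg i j, hsy j]
  have hNy : Ny ≤ r * Nx := by
    rw [hNxe, hNye]
    have h1 : ∑ i, (y i) ^ 2 ≤ r ^ 2 * ∑ i, (x i) ^ 2 := by
      rw [Finset.mul_sum]
      exact Finset.sum_le_sum fun i _ => by nlinarith [hyr i, (hy i).le, (hx i).le]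
    calc Real.sqrt (∑ i, (y i) ^ 2) ≤ Real.sqrt (r ^ 2 * ∑ i, (x i) ^ 2) :=
        Real.sqrt_le_sqrt h1
    _ = r * Real.sqrt (∑ i, (x i) ^ 2) := by
        rw [Real.sqrt_mul (sq_nonneg r), Real.sqrt_sq rpos.le]
  have hDy : s * Dx ≤ Dy := by
    rw [hDxe, hDye]
    have h1 : s ^ 2 * ∑ i, (B.mulVec x i) ^ 2 ≤ ∑ i, (B.mulVec y i) ^ 2 := by
      rw [Finset.mul_sum]
      refine Finset.sum_le_sum fun i _ => ?_
      have h := pow_le_pow_left₀ (mul_nonneg spos.le (hBxnn i)) (hBys i) 2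
      calc s ^ 2 * (B.mulVec x i) ^ 2 = (s * B.mulVec x i) ^ 2 := by ring
      _ ≤ _ := h
    calc s * Real.sqrt (∑ i, (B.mulVec x i) ^ 2)
        = Real.sqrt (s ^ 2 * ∑ i, (B.mulVec x i) ^ 2) := by
          rw [Real.sqrt_mul (sq_nonneg s), Real.sqrt_sq spos.le]
    _ ≤ Real.sqrt (∑ i, (B.mulVec y i) ^ 2) := Real.sqrt_le_sqrt h1
  have hjx : jac x = Nx / Dx := hjac x
  have hjy : jac y = Ny / Dy := hjac y
  have hjxpos : 0 < jac x := by rw [hjx]; exact div_pos hNx hDx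
  have key : jac y ≤ (r / s) * jac x := by
    rw [hjy, hjx]
    calc Ny / Dy ≤ (r * Nx) / (s * Dx) :=
        div_le_div₀ (by positivity) hNy (by positivity) hDy
    _ = (r / s) * (Nx / Dx) := mul_div_mul_comm r Nx s Dx
  calc jac y / jac x ≤ r / s := (div_le_iff₀ hjxpos).2 key
  _ ≤ Real.exp d := hrs
end

section
/- Let (T,A) be a uniform cocycle over an ergodic measure-preserving system (Δ,μ,T), i.e., ∫ ln‖A(x)‖₀ dμ < ∞ where ‖B‖₀ = max(‖B‖,‖B⁻¹‖). Define ω(κ) = sup over measurable U with μ(U) ≤ κ and over N > 0 of ∫_U (1/N) ln‖A_N(x)‖₀ dμ(x), where A_N(x) = A(T^{N-1}x)⋯A(x). Then ω(κ) → 0 as κ → 0. -/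
open MeasureTheory Filter
open scoped BigOperators ENNReal
open Topology

/-- `‖B‖₀ = max (‖B‖, ‖B⁻¹‖)` (operator norms) for an invertible linear map. -/
noncomputable def norm0 {p : ℕ}
    (e : EuclideanSpace ℝ (Fin p) ≃L[ℝ] EuclideanSpace ℝ (Fin p)) : ℝ :=
  max ‖(e : EuclideanSpace ℝ (Fin p) →L[ℝ] EuclideanSpace ℝ (Fin p))‖
    ‖(e.symm : EuclideanSpace ℝ (Fin p) →L[ℝ] EuclideanSpace ℝ (Fin p))‖

/-- The cocycle iterates `A_n(x) = A(T^{n-1} x) ⋯ A(x)`. -/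
noncomputable def cocycleIter {α : Type*} {p : ℕ} (T : α → α)
    (A : α → (EuclideanSpace ℝ (Fin p) ≃L[ℝ] EuclideanSpace ℝ (Fin p))) :
    ℕ → α → (EuclideanSpace ℝ (Fin p) ≃L[ℝ] EuclideanSpace ℝ (Fin p))
  | 0, _ => ContinuousLinearEquiv.refl ℝ (EuclideanSpace ℝ (Fin p))
  | n + 1, x => (A x).trans (cocycleIter T A n (T x))


section Aux
variable {α : Type*} [MeasurableSpace α] {p : ℕ}

local notation "E" => EuclideanSpace ℝ (Fin p)

lemma measurable_apply_vec {B : α → E →L[ℝ] E} (hB : ∀ w, Measurable fun x => B x w)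
    {v : α → E} (hv : Measurable v) : Measurable fun x => B x (v x) := by
  have key : (fun x => B x (v x))
      = fun x => ∑ j : Fin p, (v x j) • B x (EuclideanSpace.single j 1) := by
    ext x
    conv_lhs => rw [← (EuclideanSpace.basisFun (Fin p) ℝ).sum_repr (v x)]
    simp [EuclideanSpace.basisFun_apply, EuclideanSpace.basisFun_repr]
  rw [key]
  refine Finset.measurable_sum _ fun j _ => Measurable.fun_smul ?_ (hB _)
  exact (EuclideanSpace.proj j).measurable.comp hv

lemma measurable_clm {B : α → E →L[ℝ] E} (hB : ∀ w, Measurable fun x => B x w) :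
    Measurable fun x => B x := by
  classical
  let Φ : (E →L[ℝ] E) →ₗ[ℝ] (Fin p → E) :=
    { toFun := fun f i => f (EuclideanSpace.single i 1)
      map_add' := by intro f g; ext i; simp
      map_smul' := by intro c f; ext i; simp }
  have hΦinj : Function.Injective Φ := by
    intro f g hfg
    refine ContinuousLinearMap.coe_injective ?_
    refine (EuclideanSpace.basisFun (Fin p) ℝ).toBasis.ext fun i => ?_
    have := congr_fun hfg i
    simpa [Φ, EuclideanSpace.basisFun_apply] using this
  have hΦ : IsClosedEmbedding Φ := Φ.isClosedEmbedding_of_injective (by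
    rwa [LinearMap.ker_eq_bot])
  rw [← hΦ.measurableEmbedding.measurable_comp_iff]
  refine measurable_pi_lambda _ fun i => hB _

lemma measurable_norm_clm {B : α → E →L[ℝ] E} (hB : ∀ w, Measurable fun x => B x w) :
    Measurable fun x => ‖B x‖ :=
  continuous_norm.measurable.comp (measurable_clm hB)

end Aux

section Aux2
variable {α : Type*} [MeasurableSpace α] {p : ℕ}
local notation "E" => EuclideanSpace ℝ (Fin p)

local instance : MeasurableSpace (Matrix (Fin p) (Fin p) ℝ) :=
  inferInstanceAs (MeasurableSpace (Fin p → Fin p → ℝ))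
local instance : BorelSpace (Matrix (Fin p) (Fin p) ℝ) :=
  inferInstanceAs (BorelSpace (Fin p → Fin p → ℝ))

lemma clm_apply_eq_sum (f : E →L[ℝ] E) (v : E) (i : Fin p) :
    f v i = ∑ j, v j * f (EuclideanSpace.single j 1) i := by
  conv_lhs => rw [← (EuclideanSpace.basisFun (Fin p) ℝ).sum_repr v]
  rw [map_sum]
  simp only [_root_.map_smul, EuclideanSpace.basisFun_apply, EuclideanSpace.basisFun_repr]
  rw [WithLp.ofLp_sum, Finset.sum_apply]
  simp [PiLp.smul_apply, smul_eq_mul]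

lemma measurable_symm_apply {A : α → (E ≃L[ℝ] E)}
    (hA : ∀ w, Measurable fun x => A x w) (w : E) :
    Measurable fun x => (A x).symm w := by
  classical
  set M : α → Matrix (Fin p) (Fin p) ℝ :=
    fun x => Matrix.of fun i j => (A x (EuclideanSpace.single j 1)) i with hM
  have hMmeas : Measurable M := by
    refine measurable_pi_lambda _ fun i => measurable_pi_lambda _ fun j => ?_
    exact (EuclideanSpace.proj i).measurable.comp (hA _)
  have hunit : ∀ x, (M x) *
      (Matrix.of fun i j => ((A x).symm (EuclideanSpace.single j 1)) i) = 1 := by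
    intro x
    ext i k
    have h1 : ((A x : E →L[ℝ] E) ((A x).symm (EuclideanSpace.single k 1))) i
        = ∑ j, ((A x).symm (EuclideanSpace.single k 1)) j
            * (A x (EuclideanSpace.single j 1)) i :=
      clm_apply_eq_sum _ _ i
    simp only [ContinuousLinearEquiv.coe_coe, ContinuousLinearEquiv.apply_symm_apply] at h1
    rw [Matrix.mul_apply]
    simp only [hM, Matrix.of_apply, Matrix.one_apply]
    calc ∑ j, (A x) (EuclideanSpace.single j 1) i * (A x).symm (EuclideanSpace.single k 1) j
        = ∑ j, (A x).symm (EuclideanSpace.single k 1) j * (A x) (EuclideanSpace.single j 1) i :=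
          Finset.sum_congr rfl fun j _ => mul_comm _ _
      _ = EuclideanSpace.single k 1 i := h1.symm
      _ = if i = k then 1 else 0 := by simp [EuclideanSpace.single_apply]
  have hinv : ∀ x, (M x)⁻¹
      = Matrix.of fun i j => ((A x).symm (EuclideanSpace.single j 1)) i :=
    fun x => Matrix.inv_eq_right_inv (hunit x)
  have hdet : Measurable fun x => (M x).det :=
    (continuous_id.matrix_det).measurable.comp hMmeas
  have hadj : Measurable fun x => (M x).adjugate :=
    (continuous_id.matrix_adjugate).measurable.comp hMmeas
  have hMinv : ∀ i j, Measurable fun x => (M x)⁻¹ i j := by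
    intro i j
    have heq : (fun x => (M x)⁻¹ i j) = fun x => ((M x).det)⁻¹ * (M x).adjugate i j := by
      funext x; rw [Matrix.inv_def, Ring.inverse_eq_inv]; simp [Matrix.smul_apply]
    rw [heq]
    exact (hdet.inv).mul ((measurable_pi_apply j).comp ((measurable_pi_apply i).comp hadj))
  have hrep : (fun x => (A x).symm w)
      = fun x => (PiLp.continuousLinearEquiv 2 ℝ (fun _ : Fin p => ℝ)).symm
          ((M x)⁻¹.mulVec (fun j => w j)) := by
    funext x
    refine PiLp.ext fun i => ?_
    have h2 : ((A x).symm : E →L[ℝ] E) w i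
        = ∑ j, w j * ((A x).symm (EuclideanSpace.single j 1)) i := clm_apply_eq_sum _ _ i
    simp only [ContinuousLinearEquiv.coe_coe] at h2
    rw [h2, hinv x]
    exact Finset.sum_congr rfl fun j _ => mul_comm _ _
  rw [hrep]
  refine (PiLp.continuousLinearEquiv 2 ℝ (fun _ : Fin p => ℝ)).symm.continuous.measurable.comp ?_
  refine measurable_pi_lambda _ fun i => ?_
  have heq : (fun x => (M x)⁻¹.mulVec (fun j => w j) i)
      = fun x => ∑ j, (M x)⁻¹ i j * w j := rfl
  rw [heq]
  exact Finset.measurable_sum _ fun j _ => (hMinv i j).mul_const _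

end Aux2


section Aux3
variable {α : Type*} [MeasurableSpace α] {p : ℕ}
local notation "E" => EuclideanSpace ℝ (Fin p)

lemma norm0_nonneg (e : E ≃L[ℝ] E) : 0 ≤ norm0 e :=
  le_max_of_le_left (norm_nonneg _)

lemma one_le_norm0 [Nontrivial (EuclideanSpace ℝ (Fin p))] (e : E ≃L[ℝ] E) : 1 ≤ norm0 e := by
  have h1 : (1 : ℝ) ≤ ‖(e : E →L[ℝ] E)‖ * ‖(e.symm : E →L[ℝ] E)‖ := by
    calc (1 : ℝ) = ‖ContinuousLinearMap.id ℝ (EuclideanSpace ℝ (Fin p))‖ :=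
          (ContinuousLinearMap.norm_id).symm
      _ = ‖(e : E →L[ℝ] E).comp (e.symm : E →L[ℝ] E)‖ := by
          rw [e.coe_comp_coe_symm]
      _ ≤ _ := ContinuousLinearMap.opNorm_comp_le _ _
  by_contra hlt
  push_neg at hlt
  unfold norm0 at hlt
  have ha := lt_of_le_of_lt (le_max_left _ _) hlt
  have hb := lt_of_le_of_lt (le_max_right _ _) hlt
  nlinarith [norm_nonneg (e : E →L[ℝ] E), norm_nonneg (e.symm : E →L[ℝ] E)]

lemma norm0_trans_le (e f : E ≃L[ℝ] E) : norm0 (e.trans f) ≤ norm0 e * norm0 f := by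
  have h0e := norm0_nonneg e
  have h0f := norm0_nonneg f
  refine max_le ?_ ?_
  · calc ‖((e.trans f) : E →L[ℝ] E)‖ = ‖(f : E →L[ℝ] E).comp (e : E →L[ℝ] E)‖ := rfl
      _ ≤ ‖(f : E →L[ℝ] E)‖ * ‖(e : E →L[ℝ] E)‖ := ContinuousLinearMap.opNorm_comp_le _ _
      _ ≤ norm0 f * norm0 e := by
          exact mul_le_mul (le_max_left _ _) (le_max_left _ _) (norm_nonneg _) h0f
      _ = norm0 e * norm0 f := mul_comm _ _
  · calc ‖(((e.trans f).symm) : E →L[ℝ] E)‖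
        = ‖(e.symm : E →L[ℝ] E).comp (f.symm : E →L[ℝ] E)‖ := rfl
      _ ≤ ‖(e.symm : E →L[ℝ] E)‖ * ‖(f.symm : E →L[ℝ] E)‖ :=
          ContinuousLinearMap.opNorm_comp_le _ _
      _ ≤ norm0 e * norm0 f := by
          exact mul_le_mul (le_max_right _ _) (le_max_right _ _) (norm_nonneg _) h0e

lemma log_norm0_trans [Nontrivial (EuclideanSpace ℝ (Fin p))] (e f : E ≃L[ℝ] E) :
    Real.log (norm0 (e.trans f)) ≤ Real.log (norm0 e) + Real.log (norm0 f) := by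
  have he := one_le_norm0 e
  have hf := one_le_norm0 f
  calc Real.log (norm0 (e.trans f)) ≤ Real.log (norm0 e * norm0 f) := by
        refine Real.log_le_log (lt_of_lt_of_le one_pos ?_) (norm0_trans_le e f)
        exact one_le_norm0 _
    _ = Real.log (norm0 e) + Real.log (norm0 f) :=
        Real.log_mul (by linarith) (by linarith)

lemma log_norm0_cocycle_le [Nontrivial (EuclideanSpace ℝ (Fin p))]
    (T : α → α) (A : α → (E ≃L[ℝ] E)) :
    ∀ (N : ℕ) (x : α), Real.log (norm0 (cocycleIter T A N x))
      ≤ ∑ k ∈ Finset.range N, Real.log (norm0 (A (T^[k] x))) := by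
  intro N
  induction N with
  | zero =>
    intro x
    simp only [Finset.range_zero, Finset.sum_empty, cocycleIter]
    have : norm0 (ContinuousLinearEquiv.refl ℝ (EuclideanSpace ℝ (Fin p))) = 1 := by
      unfold norm0
      simp [ContinuousLinearMap.norm_id]
    rw [this, Real.log_one]
  | succ n ih =>
    intro x
    calc Real.log (norm0 (cocycleIter T A (n + 1) x))
        = Real.log (norm0 ((A x).trans (cocycleIter T A n (T x)))) := rfl
      _ ≤ Real.log (norm0 (A x)) + Real.log (norm0 (cocycleIter T A n (T x))) :=
          log_norm0_trans _ _
      _ ≤ Real.log (norm0 (A x))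
            + ∑ k ∈ Finset.range n, Real.log (norm0 (A (T^[k] (T x)))) :=
          add_le_add_right (ih (T x)) _
      _ = ∑ k ∈ Finset.range (n + 1), Real.log (norm0 (A (T^[k] x))) := by
          rw [Finset.sum_range_succ']
          simp only [Function.iterate_succ_apply, Function.iterate_zero_apply]
          exact add_comm _ _

lemma measurable_cocycle_apply {T : α → α} (hTm : Measurable T)
    {A : α → (E ≃L[ℝ] E)} (hA : ∀ w, Measurable fun x => A x w) (N : ℕ) :
    (∀ w, Measurable fun x => cocycleIter T A N x w)
      ∧ (∀ w, Measurable fun x => (cocycleIter T A N x).symm w) := by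
  induction N with
  | zero =>
    constructor <;> intro w <;>
      · simp only [cocycleIter, ContinuousLinearEquiv.refl_apply,
          ContinuousLinearEquiv.refl_symm]
        exact measurable_const
  | succ n ih =>
    constructor
    · intro w
      have h := measurable_apply_vec
        (B := fun x => ((cocycleIter T A n (T x) : E →L[ℝ] E)))
        (fun u => (ih.1 u).comp hTm) (hA w)
      simpa only [cocycleIter, ContinuousLinearEquiv.trans_apply,
        ContinuousLinearEquiv.coe_coe] using h
    · intro w
      have h := measurable_apply_vec
        (B := fun x => (((A x).symm : E →L[ℝ] E)))
        (fun u => measurable_symm_apply hA u) ((ih.2 w).comp hTm)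
      simpa only [cocycleIter, ContinuousLinearEquiv.symm_trans_apply,
        ContinuousLinearEquiv.coe_coe, Function.comp_apply] using h

end Aux3

/-- Let `(T,A)` be a uniform cocycle over an ergodic probability measure-preserving system:
`∫ log ‖A‖₀ dμ < ∞`.  Define `ω(κ)` as the supremum over measurable `U` with `μ U ≤ κ` and
`N > 0` of `∫_U (1/N) log ‖A_N‖₀ dμ`.  Then `ω(κ) → 0` as `κ → 0`: for every `ε > 0` there is
`κ > 0` such that all such integrals are at most `ε`. -/
theorem uniform_cocycle_smallness
    {α : Type*} [MeasurableSpace α] {p : ℕ}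
    (μ : Measure α) [IsProbabilityMeasure μ]
    (T : α → α) (hT : Ergodic T μ)
    (A : α → (EuclideanSpace ℝ (Fin p) ≃L[ℝ] EuclideanSpace ℝ (Fin p)))
    (hAmeas : ∀ w : EuclideanSpace ℝ (Fin p), Measurable fun x => A x w)
    (hint : Integrable (fun x => Real.log (norm0 (A x))) μ) :
    ∀ ε > 0, ∃ κ > (0 : ℝ), ∀ (U : Set α) (N : ℕ), MeasurableSet U →
      μ U ≤ ENNReal.ofReal κ → 0 < N →
      ∫ x in U, (1 / (N : ℝ)) * Real.log (norm0 (cocycleIter T A N x)) ∂μ ≤ ε := by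
  classical
  intro ε hε
  have hTm : Measurable T := hT.toMeasurePreserving.measurable
  rcases Nat.eq_zero_or_pos p with hp | hp
  · -- trivial case `p = 0`
    subst hp
    refine ⟨1, one_pos, fun U N hU hμU hN => ?_⟩
    haveI : Subsingleton (EuclideanSpace ℝ (Fin 0)) :=
      inferInstanceAs (Subsingleton (PiLp 2 fun _ : Fin 0 => ℝ))
    have hz : ∀ x, Real.log (norm0 (cocycleIter T A N x)) = 0 := by
      intro x
      unfold norm0
      rw [ContinuousLinearMap.opNorm_subsingleton, ContinuousLinearMap.opNorm_subsingleton]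
      simp
    simp only [hz, mul_zero, integral_zero]
    exact le_of_lt hε
  · -- main case `p > 0`
    haveI : Nontrivial (EuclideanSpace ℝ (Fin p)) := by
      refine ⟨EuclideanSpace.single ⟨0, hp⟩ 1, 0, fun h => ?_⟩
      have := congr_fun (congrArg (fun v : EuclideanSpace ℝ (Fin p) => (v : Fin p → ℝ)) h) ⟨0, hp⟩
      simp [EuclideanSpace.single_apply] at this
    set g : α → ℝ := fun x => Real.log (norm0 (A x)) with hg_def
    have hg_meas : Measurable g := by
      refine Real.measurable_log.comp ?_
      exact (measurable_norm_clm (fun w => hAmeas w)).max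
        (measurable_norm_clm (fun w => measurable_symm_apply hAmeas w))
    have hg0 : ∀ x, 0 ≤ g x := fun x => Real.log_nonneg (one_le_norm0 _)
    -- choose the truncation level M
    have htend : Tendsto (fun n : ℕ => ∫ x, ({y | (n : ℝ) < g y}).indicator g x ∂μ)
        atTop (𝓝 0) := by
      have h0 : (0 : ℝ) = ∫ x, (0 : ℝ) ∂μ := by simp
      rw [h0]
      refine tendsto_integral_of_dominated_convergence g ?_ hint ?_ ?_
      · intro n
        exact (hg_meas.indicator (hg_meas measurableSet_Ioi)).aestronglyMeasurable
      · intro n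
        refine Eventually.of_forall fun x => ?_
        by_cases hx : x ∈ {y | (n : ℝ) < g y}
        · rw [Set.indicator_of_mem hx]
          rw [Real.norm_eq_abs, abs_of_nonneg (hg0 x)]
        · rw [Set.indicator_of_notMem hx]
          simpa using hg0 x
      · refine Eventually.of_forall fun x => ?_
        refine tendsto_const_nhds.congr' ?_
        filter_upwards [eventually_ge_atTop ⌈g x⌉₊] with n hn
        rw [Set.indicator_of_notMem]
        simp only [Set.mem_setOf_eq, not_lt]
        exact le_trans (Nat.le_ceil _) (by exact_mod_cast hn)
    have hev : ∀ᶠ n : ℕ in atTop,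
        ∫ x, ({y | (n : ℝ) < g y}).indicator g x ∂μ < ε / 2 :=
      htend.eventually (gt_mem_nhds (half_pos hε))
    obtain ⟨n₀, hn₀, hn₀1⟩ := (hev.and (eventually_ge_atTop 1)).exists
    set M : ℝ := (n₀ : ℝ) with hM_def
    have hM1 : (1 : ℝ) ≤ M := by rw [hM_def]; exact_mod_cast hn₀1
    have hMpos : 0 < M := lt_of_lt_of_le one_pos hM1
    set S : Set α := {y | M < g y} with hS_def
    have hSmeas : MeasurableSet S := hg_meas measurableSet_Ioi
    have hSsmall : ∫ x, S.indicator g x ∂μ ≤ ε / 2 := le_of_lt hn₀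
    refine ⟨ε / (2 * M), div_pos hε (by linarith), fun U N hU hμU hN => ?_⟩
    set κ : ℝ := ε / (2 * M) with hκ_def
    have hκ0 : 0 ≤ κ := le_of_lt (div_pos hε (by linarith))
    have hμUκ : (μ U).toReal ≤ κ := ENNReal.toReal_le_of_le_ofReal hκ0 hμU
    -- integrability of the iterates of g
    have hGk_int : ∀ k : ℕ, Integrable (fun x => g (T^[k] x)) μ := by
      intro k
      have := ((hT.toMeasurePreserving.iterate k).integrable_comp
        hint.aestronglyMeasurable).mpr hint
      exact this
    -- the integrand and its properties
    set h : α → ℝ := fun x => Real.log (norm0 (cocycleIter T A N x)) with hh_def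
    have hh_meas : Measurable h := by
      refine Real.measurable_log.comp ?_
      exact (measurable_norm_clm ((measurable_cocycle_apply hTm hAmeas N).1)).max
        (measurable_norm_clm ((measurable_cocycle_apply hTm hAmeas N).2))
    have hh0 : ∀ x, 0 ≤ h x := fun x => Real.log_nonneg (one_le_norm0 _)
    set H : α → ℝ := fun x => ∑ k ∈ Finset.range N, g (T^[k] x) with hH_def
    have hH_int : Integrable H μ :=
      integrable_finset_sum _ fun k _ => hGk_int k
    have hhH : ∀ x, h x ≤ H x := fun x => log_norm0_cocycle_le T A N x
    have hh_int : Integrable h μ := by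
      refine hH_int.mono hh_meas.aestronglyMeasurable ?_
      refine Eventually.of_forall fun x => ?_
      rw [Real.norm_eq_abs, Real.norm_eq_abs, abs_of_nonneg (hh0 x)]
      exact le_trans (hhH x) (le_abs_self _)
    -- bound on each set integral of the iterates of g
    have hkey : ∀ k : ℕ, ∫ x in U, g (T^[k] x) ∂μ ≤ ε := by
      intro k
      have hTk : MeasurePreserving T^[k] μ μ := hT.toMeasurePreserving.iterate k
      have hint1 : Integrable ((T^[k] ⁻¹' S).indicator fun x => g (T^[k] x)) μ :=
        (hGk_int k).indicator (hTk.measurable hSmeas)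
      have hint2 : Integrable (U.indicator fun _ => M) μ :=
        (integrable_const M).indicator hU
      have hstep1 : ∫ x in U, g (T^[k] x) ∂μ
          ≤ ∫ x, ((T^[k] ⁻¹' S).indicator (fun x => g (T^[k] x)) x
              + U.indicator (fun _ => M) x) ∂μ := by
        rw [← integral_indicator hU]
        refine integral_mono ((hGk_int k).indicator hU) (hint1.add hint2) fun x => ?_
        dsimp only
        by_cases h1 : x ∈ U <;> by_cases h2 : x ∈ T^[k] ⁻¹' S
        · rw [Set.indicator_of_mem h1, Set.indicator_of_mem h2, Set.indicator_of_mem h1]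
          linarith [hg0 (T^[k] x)]
        · rw [Set.indicator_of_mem h1, Set.indicator_of_notMem h2, Set.indicator_of_mem h1]
          have hgM : g (T^[k] x) ≤ M := not_lt.mp h2
          linarith
        · rw [Set.indicator_of_notMem h1, Set.indicator_of_mem h2,
            Set.indicator_of_notMem h1]
          linarith [hg0 (T^[k] x)]
        · rw [Set.indicator_of_notMem h1, Set.indicator_of_notMem h2,
            Set.indicator_of_notMem h1]
          linarith
      have hstep2 : ∫ x, (T^[k] ⁻¹' S).indicator (fun x => g (T^[k] x)) x ∂μ
          = ∫ x, S.indicator g x ∂μ := by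
        have hcomp : (T^[k] ⁻¹' S).indicator (fun x => g (T^[k] x))
            = fun x => S.indicator g (T^[k] x) := by
          funext x
          exact Set.indicator_comp_right T^[k] (g := g)
        rw [hcomp]
        have := integral_map (φ := T^[k]) (f := S.indicator g)
          hTk.measurable.aemeasurable
          (by rw [hTk.map_eq]; exact (hg_meas.indicator hSmeas).aestronglyMeasurable)
        rw [hTk.map_eq] at this
        exact this.symm
      have hstep3 : ∫ x, U.indicator (fun _ => M) x ∂μ ≤ ε / 2 := by
        rw [integral_indicator_const M hU]
        have : (μ U).toReal * M ≤ κ * M :=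
          mul_le_mul_of_nonneg_right hμUκ (le_of_lt hMpos)
        have hκM : κ * M = ε / 2 := by
          field_simp [hκ_def]
          rw [hκ_def]; field_simp
        calc (μ U).toReal • M = (μ U).toReal * M := rfl
          _ ≤ κ * M := this
          _ = ε / 2 := hκM
      calc ∫ x in U, g (T^[k] x) ∂μ
          ≤ ∫ x, ((T^[k] ⁻¹' S).indicator (fun x => g (T^[k] x)) x
              + U.indicator (fun _ => M) x) ∂μ := hstep1
        _ = ∫ x, (T^[k] ⁻¹' S).indicator (fun x => g (T^[k] x)) x ∂μ
              + ∫ x, U.indicator (fun _ => M) x ∂μ := integral_add hint1 hint2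
        _ ≤ ε / 2 + ε / 2 := by
            refine add_le_add ?_ hstep3
            rw [hstep2]; exact hSsmall
        _ = ε := by ring
    -- put everything together
    have hmain : ∫ x in U, h x ∂μ ≤ N * ε := by
      calc ∫ x in U, h x ∂μ ≤ ∫ x in U, H x ∂μ :=
            setIntegral_mono_on hh_int.integrableOn hH_int.integrableOn hU
              (fun x _ => hhH x)
        _ = ∑ k ∈ Finset.range N, ∫ x in U, g (T^[k] x) ∂μ :=
            integral_finset_sum _ fun k _ => (hGk_int k).integrableOn
        _ ≤ ∑ k ∈ Finset.range N, ε := Finset.sum_le_sum fun k _ => hkey k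
        _ = N * ε := by simp [mul_comm]
    have hNpos : (0 : ℝ) < N := by exact_mod_cast hN
    calc ∫ x in U, (1 / (N : ℝ)) * h x ∂μ
        = (1 / (N : ℝ)) * ∫ x in U, h x ∂μ := integral_const_mul _ _
      _ ≤ (1 / (N : ℝ)) * (N * ε) := by
          refine mul_le_mul_of_nonneg_left hmain ?_
          positivity
      _ = ε := by field_simp
end

section
/- Let A ∈ GL(p,ℤ), let J ⊂ ℝ^p be a line with dist(J,0) < δ < 1/10 that is expanded by A (‖A·w‖ ≥ ‖w‖ on directions of J), and suppose c ∈ ℤ^p \ {0} is such that A(J ∩ B_δ(0)) ∩ B_δ(c) ≠ ∅. Then the translated line J' = A·J − c satisfies dist(J',0) ≥ (1−2δ)·‖A‖₀⁻¹, where ‖A‖₀ = max(‖A‖,‖A⁻¹‖). -/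
open Metric

/-- The integer lattice `ℤ^p ⊂ ℝ^p`. -/
def latticeZ (p : ℕ) : Set (EuclideanSpace ℝ (Fin p)) := {w | ∀ i, ∃ k : ℤ, w i = (k : ℝ)}

/-- The affine line through `u` with direction `v`. -/
def lineDir {p : ℕ} (v u : EuclideanSpace ℝ (Fin p)) : Set (EuclideanSpace ℝ (Fin p)) :=
  {w | ∃ t : ℝ, w = u + t • v}

lemma proj_min {E : Type*} [NormedAddCommGroup E] [InnerProductSpace ℝ E]
    (y w : E) (hw : w ≠ 0) (s : ℝ) :
    ‖y + (-(inner ℝ y w : ℝ) / ‖w‖ ^ 2) • w‖ ≤ ‖y + s • w‖ := by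
  have hw2 : (0:ℝ) < ‖w‖ ^ 2 := pow_pos (norm_pos_iff.mpr hw) 2
  rw [← Real.sqrt_sq (norm_nonneg (y + _ • w)), ← Real.sqrt_sq (norm_nonneg (y + s • w))]
  apply Real.sqrt_le_sqrt
  have h1 := norm_add_sq_real y ((-(inner ℝ y w : ℝ) / ‖w‖ ^ 2) • w)
  have h2 := norm_add_sq_real y (s • w)
  rw [real_inner_smul_right, norm_smul] at h1 h2
  simp only [Real.norm_eq_abs, mul_pow, sq_abs] at h1 h2
  rw [h1, h2]
  have hne : ‖w‖ ^ 2 ≠ 0 := ne_of_gt hw2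
  have key : (0:ℝ) ≤ (s * ‖w‖ ^ 2 + (inner ℝ y w : ℝ)) ^ 2 / ‖w‖ ^ 2 := by positivity
  have expand : (s * ‖w‖ ^ 2 + (inner ℝ y w : ℝ)) ^ 2 / ‖w‖ ^ 2
      = (‖y‖ ^ 2 + 2 * (s * (inner ℝ y w : ℝ)) + s ^ 2 * ‖w‖ ^ 2)
        - (‖y‖ ^ 2 + 2 * (-(inner ℝ y w : ℝ) / ‖w‖ ^ 2 * (inner ℝ y w : ℝ))
            + (-(inner ℝ y w : ℝ) / ‖w‖ ^ 2) ^ 2 * ‖w‖ ^ 2) := by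
    field_simp
    ring
  rw [expand] at key
  linarith

lemma proj_smul_le {E : Type*} [NormedAddCommGroup E] [InnerProductSpace ℝ E]
    (y w : E) (hw : w ≠ 0) :
    ‖(-(inner ℝ y w : ℝ) / ‖w‖ ^ 2) • w‖ ≤ ‖y‖ := by
  have hw0 : (0:ℝ) < ‖w‖ := norm_pos_iff.mpr hw
  rw [norm_smul, Real.norm_eq_abs]
  have hcs := abs_real_inner_le_norm y w
  rw [abs_div, abs_neg, abs_of_nonneg (by positivity : (0:ℝ) ≤ ‖w‖ ^ 2)]
  rw [div_mul_eq_mul_div, div_le_iff₀ (by positivity)]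
  calc |(inner ℝ y w : ℝ)| * ‖w‖ ≤ ‖y‖ * ‖w‖ * ‖w‖ := by nlinarith [abs_nonneg (inner ℝ y w : ℝ)]
    _ = ‖y‖ * ‖w‖ ^ 2 := by ring

lemma lattice_norm_ge_one {p : ℕ} (w : EuclideanSpace ℝ (Fin p)) (hw : w ∈ latticeZ p)
    (hw0 : w ≠ 0) : 1 ≤ ‖w‖ := by
  have : ∃ i, w i ≠ 0 := by
    by_contra h
    push_neg at h
    exact hw0 (by ext j; exact h j)
  obtain ⟨i, hi⟩ := this
  obtain ⟨k, hk⟩ := hw i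
  have hk0 : k ≠ 0 := by rintro rfl; simp [hk] at hi
  have h1 : (1:ℝ) ≤ |w i| := by
    rw [hk, ← Int.cast_abs]
    exact_mod_cast Int.one_le_abs hk0
  calc (1:ℝ) ≤ |w i| := h1
    _ ≤ ‖w‖ := by
        have := EuclideanSpace.norm_eq w
        rw [this]
        rw [← Real.sqrt_sq (abs_nonneg (w i))]
        apply Real.sqrt_le_sqrt
        rw [sq_abs]
        have : w i ^ 2 = ‖w i‖ ^ 2 := by rw [Real.norm_eq_abs, sq_abs]
        rw [this]
        exact Finset.single_le_sum (f := fun j => ‖w j‖ ^ 2)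
          (fun j _ => by positivity) (Finset.mem_univ i)

/-- Let `A ∈ GL(p,ℤ)`, let `J` be a line with `dist(J,0) < δ < 1/10` expanded by `A`, and let
`c ∈ ℤ^p \ {0}` with `A(J ∩ B_δ(0)) ∩ B_δ(c) ≠ ∅`.  Then the translated line `J' = A·J − c`
satisfies `dist(J',0) ≥ (1−2δ)·‖A‖₀⁻¹`, where `‖A‖₀ = max (‖A‖, ‖A⁻¹‖)`. -/
theorem translated_line_dist_lower_bound
    {p : ℕ} (A : EuclideanSpace ℝ (Fin p) ≃L[ℝ] EuclideanSpace ℝ (Fin p))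
    -- A ∈ GL(p,ℤ): both A and A⁻¹ preserve the integer lattice
    (hAint : ∀ w ∈ latticeZ p, A w ∈ latticeZ p ∧ A.symm w ∈ latticeZ p)
    (δ : ℝ) (hδ0 : 0 < δ) (hδ : δ < 1 / 10)
    (v u : EuclideanSpace ℝ (Fin p)) (hv : v ≠ 0)
    (hJdist : infDist 0 (lineDir v u) < δ)
    -- A expands J: `‖A·w‖ ≥ ‖w‖` on directions of J
    (hexp : ∀ t : ℝ, ‖t • v‖ ≤ ‖A (t • v)‖)
    (c : EuclideanSpace ℝ (Fin p)) (hc : c ∈ latticeZ p) (hc0 : c ≠ 0)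
    (hmeet : ((⇑A '' (lineDir v u ∩ ball 0 δ)) ∩ ball c δ).Nonempty) :
    (1 - 2 * δ) *
        (max ‖(A : EuclideanSpace ℝ (Fin p) →L[ℝ] EuclideanSpace ℝ (Fin p))‖
          ‖(A.symm : EuclideanSpace ℝ (Fin p) →L[ℝ] EuclideanSpace ℝ (Fin p))‖)⁻¹ ≤
      infDist 0 ((fun w => A w - c) '' lineDir v u) := by
  obtain ⟨b, ⟨x₀, ⟨hx₀J, hx₀ball⟩, rfl⟩, hbball⟩ := hmeet
  obtain ⟨t₀, ht₀⟩ := hx₀J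
  set M := max ‖(A : EuclideanSpace ℝ (Fin p) →L[ℝ] EuclideanSpace ℝ (Fin p))‖
          ‖(A.symm : EuclideanSpace ℝ (Fin p) →L[ℝ] EuclideanSpace ℝ (Fin p))‖ with hM
  have hx₀n : ‖x₀‖ < δ := by
    rw [mem_ball, dist_eq_norm, sub_zero] at hx₀ball; exact hx₀ball
  set y₀ := A x₀ - c with hy₀
  have hy₀n : ‖y₀‖ < δ := by
    rw [mem_ball, dist_eq_norm] at hbball; exact hbball
  set w := A v with hwdef
  have hw : w ≠ 0 := by
    simp only [hwdef, Ne, ContinuousLinearEquiv.map_eq_zero_iff]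
    exact hv
  set s : ℝ := -(inner ℝ y₀ w : ℝ) / ‖w‖ ^ 2 with hs
  set q := A.symm c with hq
  have hq1 : (1:ℝ) ≤ ‖q‖ := by
    apply lattice_norm_ge_one q ((hAint c hc).2)
    simp only [hq, Ne, ContinuousLinearEquiv.map_eq_zero_iff]
    exact hc0
  -- the minimizing point
  set xs := x₀ + s • v with hxs
  have hys : A xs - c = y₀ + s • w := by
    simp only [hxs, map_add, map_smul, hy₀, hwdef]
    abel
  have hzs : ‖s • v‖ < δ := by
    calc ‖s • v‖ ≤ ‖A (s • v)‖ := hexp s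
      _ = ‖s • w‖ := by rw [map_smul]
      _ ≤ ‖y₀‖ := proj_smul_le y₀ w hw
      _ < δ := hy₀n
  have hxsn : ‖xs‖ < 2 * δ := by
    calc ‖xs‖ ≤ ‖x₀‖ + ‖s • v‖ := norm_add_le _ _
      _ < δ + δ := by linarith
      _ = 2 * δ := by ring
  have hxq : 1 - 2 * δ ≤ ‖xs - q‖ := by
    have := norm_sub_norm_le q xs
    have h2 : ‖q - xs‖ = ‖xs - q‖ := norm_sub_rev _ _
    linarith [norm_sub_norm_le q xs, h2 ▸ norm_sub_norm_le q xs]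
  have hAs : ‖xs - q‖ ≤ ‖(A.symm : EuclideanSpace ℝ (Fin p) →L[ℝ] EuclideanSpace ℝ (Fin p))‖ * ‖y₀ + s • w‖ := by
    have : A.symm (A xs - c) = xs - q := by
      rw [map_sub, ContinuousLinearEquiv.symm_apply_apply, hq]
    calc ‖xs - q‖ = ‖A.symm (A xs - c)‖ := by rw [this]
      _ ≤ ‖(A.symm : EuclideanSpace ℝ (Fin p) →L[ℝ] EuclideanSpace ℝ (Fin p))‖ * ‖A xs - c‖ :=
          (A.symm : EuclideanSpace ℝ (Fin p) →L[ℝ] EuclideanSpace ℝ (Fin p)).le_opNorm _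
      _ = ‖(A.symm : EuclideanSpace ℝ (Fin p) →L[ℝ] EuclideanSpace ℝ (Fin p))‖ * ‖y₀ + s • w‖ := by rw [hys]
  have hδ2 : (0:ℝ) < 1 - 2 * δ := by linarith
  have hkey : 1 - 2 * δ ≤ M * ‖y₀ + s • w‖ := by
    have hle : ‖(A.symm : EuclideanSpace ℝ (Fin p) →L[ℝ] EuclideanSpace ℝ (Fin p))‖ ≤ M :=
      le_max_right _ _
    nlinarith [norm_nonneg (y₀ + s • w)]
  have hM0 : 0 < M := by
    rcases le_or_gt M 0 with h | h
    · exfalso; nlinarith [norm_nonneg (y₀ + s • w), mul_nonpos_of_nonpos_of_nonneg h (norm_nonneg (y₀ + s • w))]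
    · exact h
  have hbound : (1 - 2 * δ) * M⁻¹ ≤ ‖y₀ + s • w‖ := by
    rw [← div_eq_mul_inv, div_le_iff₀ hM0]
    linarith [hkey, mul_comm M ‖y₀ + s • w‖]
  -- pointwise bound on the image set
  have hpt : ∀ y ∈ (fun w => A w - c) '' lineDir v u, (1 - 2 * δ) * M⁻¹ ≤ dist (0 : EuclideanSpace ℝ (Fin p)) y := by
    rintro y ⟨x, ⟨t, rfl⟩, rfl⟩
    rw [dist_comm, dist_zero_right]
    show (1 - 2 * δ) * M⁻¹ ≤ ‖A (u + t • v) - c‖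
    have heq : A (u + t • v) - c = y₀ + (t - t₀) • w := by
      have : u + t • v = x₀ + (t - t₀) • v := by
        rw [ht₀, sub_smul]; abel
      rw [this, map_add, map_smul, hy₀, hwdef]
      abel
    rw [heq]
    exact hbound.trans (proj_min y₀ w hw (t - t₀))
  by_contra h
  push_neg at h
  have hne : ((fun w => A w - c) '' lineDir v u).Nonempty :=
    ⟨A u - c, u, ⟨0, by simp⟩, rfl⟩
  obtain ⟨y, hy, hyd⟩ := (infDist_lt_iff hne).mp h
  exact absurd hyd (not_lt.mpr (hpt y hy))
end

section
/- Rauzy elementary operations preserve irreducibility: if π is an irreducible permutation of {1,...,d} and π' is obtained from π by an elementary Rauzy operation of type 1 or type 2, then π' is irreducible. -/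
private lemma perm_mem_iff_of_image_eq {α : Type*} (e : Equiv.Perm α) (S : Set α)
    (h : ⇑e '' S = S) : ∀ i, i ∈ S ↔ e i ∈ S := by
  intro i
  constructor
  · intro hi; rw [← h]; exact ⟨i, hi, rfl⟩
  · intro hi
    rw [← h] at hi
    obtain ⟨j, hj, hje⟩ := hi
    rwa [← e.injective hje]

private lemma perm_image_eq_of_mem_iff {α : Type*} (e : Equiv.Perm α) (S : Set α)
    (h : ∀ i, i ∈ S ↔ e i ∈ S) : ⇑e '' S = S := by
  ext j
  constructor
  · rintro ⟨i, hi, rfl⟩; exact (h i).1 hi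
  · intro hj
    refine ⟨e.symm j, ?_, e.apply_symm_apply j⟩
    have hi := h (e.symm j)
    rw [e.apply_symm_apply] at hi
    exact hi.2 hj

/-- A permutation of `{0,…,d-1}` (representing `{1,…,d}`) is irreducible if it maps no proper
initial segment onto itself. -/
def RauzyIrreducible {d : ℕ} (π : Equiv.Perm (Fin d)) : Prop :=
  ∀ m : ℕ, 0 < m → m < d → ⇑π '' {i : Fin d | (i : ℕ) < m} ≠ {i : Fin d | (i : ℕ) < m}

/-- Rauzy elementary operations preserve irreducibility: if `π` is irreducible and `π'` is
obtained from `π` by an elementary operation of type 1 or type 2, then `π'` is irreducible.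
Here `D` is the last index (representing `d` in 1-based notation). -/
theorem rauzy_operation_preserves_irreducible
    {d : ℕ} (hd : 2 ≤ d) (π π' : Equiv.Perm (Fin d))
    (D : Fin d) (hD : (D : ℕ) = d - 1)
    (hcase :
      -- type 1: π'(i) = π(i) for i ≤ π⁻¹(d); π'(π⁻¹(d)+1) = π(d); π'(i) = π(i−1) above
      ((∀ i : Fin d, (i : ℕ) ≤ (π.symm D : ℕ) → π' i = π i) ∧
       (∀ i : Fin d, (i : ℕ) = (π.symm D : ℕ) + 1 → π' i = π D) ∧
       (∀ i j : Fin d, (i : ℕ) = (j : ℕ) + 1 → (π.symm D : ℕ) + 1 < (i : ℕ) → π' i = π j))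
      ∨
      -- type 2: π'(i) = π(i) if π(i) ≤ π(d); π(i)+1 if π(d) < π(i) < d; π(d)+1 if π(i) = d
      ((∀ i : Fin d, (π i : ℕ) ≤ (π D : ℕ) → π' i = π i) ∧
       (∀ i : Fin d, (π D : ℕ) < (π i : ℕ) → (π i : ℕ) < (D : ℕ) →
          (π' i : ℕ) = (π i : ℕ) + 1) ∧
       (∀ i : Fin d, π i = D → (π' i : ℕ) = (π D : ℕ) + 1)))
    (hirr : RauzyIrreducible π) : RauzyIrreducible π' := by
  intro m hm0 hm1 h
  have hmem := perm_mem_iff_of_image_eq π' _ h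
  simp only [Set.mem_setOf_eq] at hmem
  rcases hcase with ⟨h1, _, _⟩ | ⟨h1, h2, h3⟩
  · -- Type 1
    by_cases hpm : ((π.symm D : Fin d) : ℕ) < m
    · -- π'(π⁻¹ D) = D is in the segment, but (D : ℕ) = d - 1 ≥ m : contradiction
      have hpD : π' (π.symm D) = π (π.symm D) := h1 _ (le_refl _)
      have hfix : π (π.symm D) = D := π.apply_symm_apply D
      have hlt := (hmem (π.symm D)).1 hpm
      rw [hpD, hfix] at hlt
      omega
    · -- π' agrees with π on the segment
      have himg : ⇑π '' {i : Fin d | (i : ℕ) < m} = ⇑π' '' {i : Fin d | (i : ℕ) < m} :=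
        Set.image_congr (fun i hi => (h1 i (by
          simp only [Set.mem_setOf_eq] at hi; omega)).symm)
      exact hirr m hm0 hm1 (himg.trans h)
  · -- Type 2
    by_cases hmc : m ≤ (π D : ℕ) + 1
    · apply hirr m hm0 hm1
      apply perm_image_eq_of_mem_iff
      intro i
      simp only [Set.mem_setOf_eq]
      have hi' := hmem i
      by_cases hle : (π i : ℕ) ≤ (π D : ℕ)
      · rw [hi', h1 i hle]
      · push_neg at hle
        have hπi : ¬ (π i : ℕ) < m := by omega
        have hπ'i : ¬ (π' i : ℕ) < m := by
          by_cases hlt : (π i : ℕ) < (D : ℕ)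
          · rw [h2 i hle hlt]; omega
          · have hiD : π i = D := by
              apply Fin.ext
              have := (π i).isLt
              omega
            rw [h3 i hiD]; omega
        constructor
        · intro him; exact absurd (hi'.1 him) hπ'i
        · intro him; exact absurd him hπi
    · -- π'(D) = π(D) < m forces D < m : contradiction
      have hD' : π' D = π D := h1 D (le_refl _)
      have hlt := (hmem D).2 (by rw [hD']; omega)
      omega
end
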